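/- arXiv:2410.08795 — 7 statements merged into one kernel-verified Lean document; each statement's English description precedes it below -/
import Mathlib

section
/- Let 𝕜 be a field, n ≥ 1 an integer, and q ∈ 𝕜 an element which is banal for n, i.e. q ≠ 0 and qⁱ ≠ 1 in 𝕜 for all i = 1, …, n. Let A be a commutative 𝕜-algebra, let Φ be an invertible n×n matrix over A and N an n×n matrix over A satisfying Φ·N = q·(N·Φ). Then the characteristic polynomial of N equals tⁿ, i.e. every coefficient of the characteristic polynomial det(t·I − N) other than the leading one vanishes. -/
open Polynomial Matrix

private lemma charpoly_unit_conj {A : Type*} [CommRing A] {n : ℕ}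
    (u : (Matrix (Fin n) (Fin n) A)ˣ) (M : Matrix (Fin n) (Fin n) A) :
    (u.val * M * u⁻¹.val).charpoly = M.charpoly := by
  set U : Matrix (Fin n) (Fin n) A[X] := (C : A →+* A[X]).mapMatrix u.val with hU
  set V : Matrix (Fin n) (Fin n) A[X] := (C : A →+* A[X]).mapMatrix u⁻¹.val with hV
  have hUV : U * V = 1 := by
    rw [hU, hV, ← RingHom.map_mul, Units.mul_inv, RingHom.map_one]
  have hsc : U * Matrix.scalar (Fin n) (X : A[X]) * V = Matrix.scalar (Fin n) (X : A[X]) := by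
    rw [(Matrix.scalar_commute (X : A[X]) (fun r => Commute.all _ _) U).symm.eq, mul_assoc, hUV,
      mul_one]
  have key : charmatrix (u.val * M * u⁻¹.val) = U * charmatrix M * V := by
    unfold charmatrix
    rw [mul_sub, sub_mul, hsc, hU, hV, ← RingHom.map_mul, ← RingHom.map_mul]
  unfold Matrix.charpoly
  rw [key, det_mul, det_mul, mul_comm, ← mul_assoc, ← det_mul]
  rw [show V * U = 1 by rw [hU, hV, ← RingHom.map_mul, Units.inv_mul, RingHom.map_one]]
  rw [det_one, one_mul]

private lemma coeff_aeval_C_mul_X {A : Type*} [CommRing A] (a : A) (p : A[X]) (k : ℕ) :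
    (Polynomial.aeval (C a * X : A[X]) p).coeff k = a ^ k * p.coeff k := by
  induction p using Polynomial.induction_on' with
  | add p q hp hq => simp [hp, hq, mul_add]
  | monomial m c =>
      rw [aeval_monomial, mul_pow, ← C_pow]
      simp only [algebraMap_eq, ← mul_assoc, ← C_mul, coeff_C_mul, coeff_X_pow, coeff_monomial]
      by_cases h : m = k
      · simp [h, mul_comm]
      · rw [if_neg h, mul_zero, if_neg (fun h' : k = m => h h'.symm), mul_zero]

/-- If `q` is banal for `n` in a field `𝕜` (i.e. `q ≠ 0` and `q ^ i ≠ 1` for `i = 1, …, n`),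
`A` is a commutative `𝕜`-algebra, `Φ` is an invertible `n × n` matrix over `A` and `N` is an
`n × n` matrix over `A` with `Φ * N = q • (N * Φ)`, then the characteristic polynomial of `N`
is `t ^ n`. -/
theorem charpoly_eq_X_pow_of_banal
    (𝕜 : Type*) [Field 𝕜] (A : Type*) [CommRing A] [Algebra 𝕜 A]
    (n : ℕ) (hn : 1 ≤ n) (q : 𝕜) (hq0 : q ≠ 0)
    (hq : ∀ i : ℕ, 1 ≤ i → i ≤ n → q ^ i ≠ 1)
    (Φ N : Matrix (Fin n) (Fin n) A) (hΦ : IsUnit Φ)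
    (hcomm : Φ * N = q • (N * Φ)) :
    N.charpoly = Polynomial.X ^ n := by
  classical
  rcases subsingleton_or_nontrivial A with hA | hA
  · exact Subsingleton.elim _ _
  obtain ⟨u, rfl⟩ := hΦ
  set a : A := algebraMap 𝕜 A q with ha
  have hconj : u.val * N * u⁻¹.val = q • N := by
    rw [hcomm, smul_mul_assoc, mul_assoc, Units.mul_inv, mul_one]
  have hsmul : (q • N : Matrix (Fin n) (Fin n) A) = a • N := by
    ext i j; simp [ha, Algebra.smul_def, Matrix.smul_apply]
  have hcp : (a • N : Matrix (Fin n) (Fin n) A).charpoly = N.charpoly := by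
    rw [← hsmul, ← hconj, charpoly_unit_conj]
  -- key polynomial identity
  have key : Polynomial.aeval (C a * X : A[X]) N.charpoly = C (a ^ n) * N.charpoly := by
    conv_lhs => rw [← hcp]
    have hmap : (charmatrix (a • N)).map (Polynomial.aeval (C a * X : A[X]))
        = (C a : A[X]) • charmatrix N := by
      ext i j
      by_cases h : i = j
      · subst h
        simp only [Matrix.map_apply, charmatrix_apply_eq, Matrix.smul_apply, smul_eq_mul,
          map_sub, _root_.map_mul, aeval_X, aeval_C, algebraMap_eq, mul_sub, C_mul]
      · simp only [Matrix.map_apply, Matrix.charmatrix_apply_ne _ _ _ h, Matrix.smul_apply,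
          smul_eq_mul, map_neg, _root_.map_mul, aeval_C, algebraMap_eq, C_mul, mul_neg]
    unfold Matrix.charpoly
    rw [show ((Polynomial.aeval (C a * X : A[X])) (charmatrix (a • N)).det)
        = ((charmatrix (a • N)).map (Polynomial.aeval (C a * X : A[X])).toRingHom).det from
        RingHom.map_det _ _]
    rw [show (charmatrix (a • N)).map ((Polynomial.aeval (C a * X : A[X])).toRingHom : A[X] → A[X])
        = (C a : A[X]) • charmatrix N from hmap]
    rw [Matrix.det_smul, Fintype.card_fin, ← C_pow]
  have hcoeff : ∀ k : ℕ, a ^ k * N.charpoly.coeff k = a ^ n * N.charpoly.coeff k := by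
    intro k
    have h := congrArg (fun p => Polynomial.coeff p k) key
    simpa only [coeff_aeval_C_mul_X, coeff_C_mul] using h
  have hmonic : N.charpoly.Monic := Matrix.charpoly_monic N
  have hdeg : N.charpoly.natDegree = n := (Matrix.charpoly_natDegree_eq_dim N).trans (Fintype.card_fin n)
  have haunit : IsUnit a := (IsUnit.mk0 q hq0).map (algebraMap 𝕜 A)
  have hzero : ∀ k : ℕ, k < n → N.charpoly.coeff k = 0 := by
    intro k hk
    set c : A := N.charpoly.coeff k with hc
    have hpow : a ^ k * a ^ (n - k) = a ^ n := by rw [← pow_add]; congr 1; omega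
    have h1 : a ^ k * ((a ^ (n - k) - 1) * c) = 0 := by
      calc a ^ k * ((a ^ (n - k) - 1) * c) = a ^ k * a ^ (n - k) * c - a ^ k * c := by ring
      _ = a ^ n * c - a ^ k * c := by rw [hpow]
      _ = 0 := by rw [← hcoeff k, sub_self]
    have h2 : (a ^ (n - k) - 1) * c = 0 := ((haunit.pow k).mul_right_eq_zero).mp h1
    have hne : q ^ (n - k) - 1 ≠ 0 := by
      intro h
      exact hq (n - k) (by omega) (by omega) (sub_eq_zero.mp h)
    have h3 : IsUnit (a ^ (n - k) - 1 : A) := by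
      have : (a ^ (n - k) - 1 : A) = algebraMap 𝕜 A (q ^ (n - k) - 1) := by
        simp [ha, map_sub, map_pow]
      rw [this]
      exact (IsUnit.mk0 _ hne).map (algebraMap 𝕜 A)
    exact h3.mul_right_eq_zero.mp h2
  ext k
  rcases lt_trichotomy k n with h | h | h
  · rw [hzero k h, coeff_X_pow, if_neg h.ne]
  · subst h
    have h1 := hmonic.coeff_natDegree
    rw [hdeg] at h1
    rw [coeff_X_pow, if_pos rfl, h1]
  · rw [coeff_X_pow, if_neg h.ne', Polynomial.coeff_eq_zero_of_natDegree_lt (by omega)]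
end

section
/- Let 𝕜 be a field, n ≥ 1 an integer, and q ∈ 𝕜 banal for n (q ≠ 0 and qⁱ ≠ 1 for i = 1, …, n). Let a, b ∈ {1, …, n}. Then the 𝕜-linear map from M_{a×b}(𝕜) × M_{a×b}(𝕜) to M_{a×b}(𝕜) sending (Y, Z) to (Φ_a·Y − q·Y·Φ_b) + (Z·N_b − q·N_a·Z) is surjective; equivalently, its kernel has dimension a·b over 𝕜. -/
open Matrix

/-- The diagonal matrix `Φ_d = diag(q^{d-1}, q^{d-2}, …, q, 1)`. -/
noncomputable def banalPhi (𝕜 : Type*) [Field 𝕜] (q : 𝕜) (d : ℕ) :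
    Matrix (Fin d) (Fin d) 𝕜 :=
  Matrix.diagonal fun i => q ^ (d - 1 - (i : ℕ))

/-- The nilpotent `d × d` Jordan block `N_d` with ones on the superdiagonal. -/
def jordanN (𝕜 : Type*) [Field 𝕜] (d : ℕ) : Matrix (Fin d) (Fin d) 𝕜 :=
  Matrix.of fun i j => if (i : ℕ) + 1 = (j : ℕ) then 1 else 0

/-!
On the matrix unit `E_ij`, the `Y`-part of the map acts as the scalar `q^(a-1-i) - q^(b-j)`,
which is nonzero unless `a - 1 - i = b - j` since the powers `q^0, …, q^n` are distinct.
On the remaining "critical" units the `Z`-part gives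
`E_{i+1,j}·N_b - q·E_ij = E_{i+1,j+1} - q·E_ij` (with `E_{i+1,b} = 0`), and `(i+1, j+1)` is
again critical, so induction on `b - j` puts every matrix unit in the range.
-/

theorem pow_injOn_Iic_of_pow_ne_one {M₀ : Type*} [MonoidWithZero M₀] [IsLeftCancelMulZero M₀]
    {q : M₀} {n : ℕ} (hq0 : q ≠ 0) (hq : ∀ i : ℕ, 1 ≤ i → i ≤ n → q ^ i ≠ 1) :
    Set.InjOn (q ^ ·) (Set.Iic n) := by
  intro s hs t ht hst
  wlog hle : s ≤ t generalizing s t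
  · exact (this ht hs hst.symm (le_of_not_ge hle)).symm
  obtain ⟨k, rfl⟩ := Nat.exists_eq_add_of_le hle
  have hk : q ^ k = 1 := by
    refine mul_left_cancel₀ (pow_ne_zero s hq0) ?_
    simpa [pow_add] using hst.symm
  by_contra hne
  exact hq k (by omega) (by simp at ht; omega) hk

section BanalMap

variable {𝕜 : Type*} [Field 𝕜] {q : 𝕜} {a b : ℕ}

theorem banalPhi_mul_single (i : Fin a) (j : Fin b) (v : 𝕜) :
    banalPhi 𝕜 q a * single i j v = single i j (q ^ (a - 1 - (i : ℕ)) * v) := by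
  ext x y
  by_cases hx : i = x <;> simp [banalPhi, diagonal_mul, single_apply, hx]

theorem single_mul_banalPhi (i : Fin a) (j : Fin b) (v : 𝕜) :
    single i j v * banalPhi 𝕜 q b = single i j (v * q ^ (b - 1 - (j : ℕ))) := by
  ext x y
  by_cases hy : j = y <;> simp [banalPhi, mul_diagonal, single_apply, hy]

theorem single_mul_jordanN (i : Fin a) (j : Fin b) (v : 𝕜) :
    single i j v * jordanN 𝕜 b =
      if h : (j : ℕ) + 1 < b then single i ⟨j + 1, h⟩ v else 0 := by
  ext x y
  by_cases hx : i = x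
  · subst hx
    rw [single_mul_apply_same]
    split_ifs with h
    · simp [jordanN, single_apply, Fin.ext_iff]
    · simp [jordanN]
      omega
  · rw [single_mul_apply_of_ne _ _ _ _ _ (Ne.symm hx)]
    split_ifs <;> simp [hx]

theorem jordanN_mul_single_succ (i : Fin a) (hi : (i : ℕ) + 1 < a) (j : Fin b) (v : 𝕜) :
    jordanN 𝕜 a * single (⟨i + 1, hi⟩ : Fin a) j v = single i j v := by
  ext x y
  by_cases hy : j = y
  · subst hy
    rw [mul_single_apply_same]
    simp [jordanN, single_apply, Fin.ext_iff, eq_comm]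
  · rw [mul_single_apply_of_ne _ _ _ _ _ (Ne.symm hy)]
    simp [hy]

variable (𝕜 q a b) in
noncomputable def banalMap :
    (Matrix (Fin a) (Fin b) 𝕜 × Matrix (Fin a) (Fin b) 𝕜) →ₗ[𝕜] Matrix (Fin a) (Fin b) 𝕜 where
  toFun p := (banalPhi 𝕜 q a * p.1 - q • (p.1 * banalPhi 𝕜 q b))
      + (p.2 * jordanN 𝕜 b - q • (jordanN 𝕜 a * p.2))
  map_add' p r := by
    simp only [Prod.fst_add, Prod.snd_add, Matrix.mul_add, Matrix.add_mul, smul_add]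
    abel
  map_smul' c p := by
    simp only [Prod.smul_fst, Prod.smul_snd, Matrix.mul_smul, Matrix.smul_mul, smul_sub, smul_add,
      RingHom.id_apply, smul_comm c q]

theorem banalMap_apply (p : Matrix (Fin a) (Fin b) 𝕜 × Matrix (Fin a) (Fin b) 𝕜) :
    banalMap 𝕜 q a b p = (banalPhi 𝕜 q a * p.1 - q • (p.1 * banalPhi 𝕜 q b))
      + (p.2 * jordanN 𝕜 b - q • (jordanN 𝕜 a * p.2)) :=
  rfl

theorem banalMap_single_zero (i : Fin a) (j : Fin b) (v : 𝕜) :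
    banalMap 𝕜 q a b (single i j v, 0)
      = (q ^ (a - 1 - (i : ℕ)) - q ^ (b - (j : ℕ))) • single i j v := by
  have hexp : b - (j : ℕ) = b - 1 - j + 1 := by omega
  rw [banalMap_apply, banalPhi_mul_single, single_mul_banalPhi, hexp, pow_succ']
  ext x y
  by_cases hxy : i = x ∧ j = y
  · obtain ⟨rfl, rfl⟩ := hxy
    simp
    ring
  · simp [hxy]

theorem banalMap_zero_single_succ (i : Fin a) (hi : (i : ℕ) + 1 < a) (j : Fin b) (v : 𝕜) :
    banalMap 𝕜 q a b (0, single (⟨i + 1, hi⟩ : Fin a) j v)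
      = single (⟨i + 1, hi⟩ : Fin a) j v * jordanN 𝕜 b - q • single i j v := by
  rw [banalMap_apply, jordanN_mul_single_succ]
  simp

theorem single_mem_range_banalMap_of_pow_ne (i : Fin a) (j : Fin b)
    (hij : q ^ (a - 1 - (i : ℕ)) ≠ q ^ (b - (j : ℕ))) (v : 𝕜) :
    single i j v ∈ LinearMap.range (banalMap 𝕜 q a b) := by
  refine ⟨(single i j ((q ^ (a - 1 - (i : ℕ)) - q ^ (b - (j : ℕ)))⁻¹ * v), 0), ?_⟩
  rw [banalMap_single_zero, Matrix.smul_single, smul_eq_mul, ← mul_assoc,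
    mul_inv_cancel₀ (sub_ne_zero.mpr hij), one_mul]

theorem single_mem_range_banalMap_of_succ (hq0 : q ≠ 0) (i : Fin a) (hi : (i : ℕ) + 1 < a)
    (j : Fin b) (v : 𝕜) (hnext : single (⟨i + 1, hi⟩ : Fin a) j v * jordanN 𝕜 b ∈
      LinearMap.range (banalMap 𝕜 q a b)) :
    single i j v ∈ LinearMap.range (banalMap 𝕜 q a b) := by
  have hsingle : single i j v = q⁻¹ • (single (⟨i + 1, hi⟩ : Fin a) j v * jordanN 𝕜 b
      - banalMap 𝕜 q a b (0, single (⟨i + 1, hi⟩ : Fin a) j v)) := by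
    rw [banalMap_zero_single_succ, sub_sub_cancel, smul_smul, inv_mul_cancel₀ hq0, one_smul]
  rw [hsingle]
  exact Submodule.smul_mem _ _ (Submodule.sub_mem _ hnext (LinearMap.mem_range_self _ _))

theorem single_mem_range_banalMap {n : ℕ} (hq0 : q ≠ 0) (hinj : Set.InjOn (q ^ ·) (Set.Iic n))
    (han : a ≤ n) (hbn : b ≤ n) (i : Fin a) (j : Fin b) (v : 𝕜) :
    single i j v ∈ LinearMap.range (banalMap 𝕜 q a b) := by
  by_cases hcrit : a - 1 - (i : ℕ) = b - (j : ℕ)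
  · have hi : (i : ℕ) + 1 < a := by omega
    refine single_mem_range_banalMap_of_succ hq0 i hi j v ?_
    rw [single_mul_jordanN]
    split_ifs with hj
    · exact single_mem_range_banalMap hq0 hinj han hbn _ _ v
    · exact zero_mem _
  · refine single_mem_range_banalMap_of_pow_ne i j (fun h => hcrit ?_) v
    exact hinj (by simp; omega) (by simp; omega) h
termination_by b - (j : ℕ)

theorem banalMap_surjective {n : ℕ} (hq0 : q ≠ 0) (hinj : Set.InjOn (q ^ ·) (Set.Iic n))
    (han : a ≤ n) (hbn : b ≤ n) : Function.Surjective (banalMap 𝕜 q a b) := by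
  rw [← LinearMap.range_eq_top, Submodule.eq_top_iff']
  intro T
  induction T using Matrix.induction_on' with
  | h_zero => exact zero_mem _
  | h_add S T hS hT => exact add_mem hS hT
  | h_std_basis i j v => exact single_mem_range_banalMap hq0 hinj han hbn i j v

theorem finrank_ker_banalMap (hsurj : Function.Surjective (banalMap 𝕜 q a b)) :
    Module.finrank 𝕜 (LinearMap.ker (banalMap 𝕜 q a b)) = a * b := by
  have hrank := (banalMap 𝕜 q a b).finrank_range_add_finrank_ker
  rw [LinearMap.range_eq_top.mpr hsurj, finrank_top,
    Module.finrank_prod, Module.finrank_matrix] at hrank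
  simp only [Fintype.card_fin, Module.finrank_self, mul_one] at hrank
  omega

end BanalMap

theorem banal_matrix_map_surjective_general
    (𝕜 : Type*) [Field 𝕜] (n : ℕ) (q : 𝕜) (hq0 : q ≠ 0)
    (hq : ∀ i : ℕ, 1 ≤ i → i ≤ n → q ^ i ≠ 1)
    (a b : ℕ) (han : a ≤ n) (hbn : b ≤ n) :
    Function.Surjective
      (fun p : Matrix (Fin a) (Fin b) 𝕜 × Matrix (Fin a) (Fin b) 𝕜 =>
        (banalPhi 𝕜 q a * p.1 - q • (p.1 * banalPhi 𝕜 q b))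
          + (p.2 * jordanN 𝕜 b - q • (jordanN 𝕜 a * p.2))) ∧
    ∀ L : (Matrix (Fin a) (Fin b) 𝕜 × Matrix (Fin a) (Fin b) 𝕜) →ₗ[𝕜]
        Matrix (Fin a) (Fin b) 𝕜,
      (∀ p : Matrix (Fin a) (Fin b) 𝕜 × Matrix (Fin a) (Fin b) 𝕜,
        L p = (banalPhi 𝕜 q a * p.1 - q • (p.1 * banalPhi 𝕜 q b))
          + (p.2 * jordanN 𝕜 b - q • (jordanN 𝕜 a * p.2))) →
      Module.finrank 𝕜 (LinearMap.ker L) = a * b := by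
  have hsurj := banalMap_surjective hq0 (pow_injOn_Iic_of_pow_ne_one hq0 hq) han hbn
  refine ⟨hsurj, fun L hL => ?_⟩
  obtain rfl : L = banalMap 𝕜 q a b := LinearMap.ext hL
  exact finrank_ker_banalMap hsurj

/-- If `q` is banal for `n` in the field `𝕜` and `1 ≤ a, b ≤ n`, then the `𝕜`-linear map
`(Y, Z) ↦ (Φ_a·Y − q·Y·Φ_b) + (Z·N_b − q·N_a·Z)` on pairs of `a × b` matrices is surjective,
and (equivalently) its kernel has dimension `a * b` over `𝕜`. -/
theorem banal_matrix_map_surjective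
    (𝕜 : Type*) [Field 𝕜] (n : ℕ) (hn : 1 ≤ n) (q : 𝕜) (hq0 : q ≠ 0)
    (hq : ∀ i : ℕ, 1 ≤ i → i ≤ n → q ^ i ≠ 1)
    (a b : ℕ) (ha1 : 1 ≤ a) (han : a ≤ n) (hb1 : 1 ≤ b) (hbn : b ≤ n) :
    Function.Surjective
      (fun p : Matrix (Fin a) (Fin b) 𝕜 × Matrix (Fin a) (Fin b) 𝕜 =>
        (banalPhi 𝕜 q a * p.1 - q • (p.1 * banalPhi 𝕜 q b))
          + (p.2 * jordanN 𝕜 b - q • (jordanN 𝕜 a * p.2))) ∧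
    ∀ L : (Matrix (Fin a) (Fin b) 𝕜 × Matrix (Fin a) (Fin b) 𝕜) →ₗ[𝕜]
        Matrix (Fin a) (Fin b) 𝕜,
      (∀ p : Matrix (Fin a) (Fin b) 𝕜 × Matrix (Fin a) (Fin b) 𝕜,
        L p = (banalPhi 𝕜 q a * p.1 - q • (p.1 * banalPhi 𝕜 q b))
          + (p.2 * jordanN 𝕜 b - q • (jordanN 𝕜 a * p.2))) →
      Module.finrank 𝕜 (LinearMap.ker L) = a * b :=
  banal_matrix_map_surjective_general 𝕜 n q hq0 hq a b han hbn
end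

section
/- Let A be a commutative Artinian local ring with maximal ideal m. Let a, b ≥ 1 be integers, and let α, β ∈ A with α − β ∉ m (i.e. α ≢ β mod m). Let U be an a×a matrix over A and V a b×b matrix over A such that their reductions Ū mod m and V̄ mod m are unipotent, i.e. (Ū − I_a)^a = 0 and (V̄ − I_b)^b = 0 over the residue field A/m. If N is an a×b matrix over A satisfying α·U·N = β·N·V, then N = 0. -/
open IsLocalRing

private lemma entries_pow_mem {A : Type*} [CommRing A] {c : ℕ} (I : Ideal A)
    (X : Matrix (Fin c) (Fin c) A) (h : ∀ i j, X i j ∈ I) (k : ℕ) :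
    ∀ i j, (X ^ k) i j ∈ I ^ k := by
  induction k with
  | zero => intro i j; simp [Ideal.one_eq_top]
  | succ k ih =>
    intro i j
    rw [pow_succ, pow_succ, Matrix.mul_apply]
    exact Ideal.sum_mem _ fun c _ => Ideal.mul_mem_mul (ih i c) (h c j)

private lemma aux_nilp {A : Type*} [CommRing A] [IsArtinianRing A] [IsLocalRing A] {c : ℕ}
    (X : Matrix (Fin c) (Fin c) A) (h : (X.map (residue A)) ^ c = 0) :
    IsNilpotent X := by
  obtain ⟨n, hn⟩ := IsArtinianRing.isNilpotent_jacobson_bot (R := A)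
  rw [IsLocalRing.jacobson_eq_maximalIdeal ⊥ bot_ne_top] at hn
  refine ⟨c * n, ?_⟩
  have hmem : ∀ i j, (X ^ c) i j ∈ maximalIdeal A := by
    intro i j
    have h2 : (X ^ c).map (residue A) = 0 := by
      rw [← RingHom.mapMatrix_apply, map_pow, RingHom.mapMatrix_apply, h]
    have : residue A ((X ^ c) i j) = 0 := by
      have := congrFun (congrFun h2 i) j
      simpa [Matrix.map_apply] using this
    exact Ideal.Quotient.eq_zero_iff_mem.1 this
  rw [pow_mul]
  ext i j
  have := entries_pow_mem _ _ hmem n i j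
  rw [hn] at this
  simpa using this

/-- Left multiplication as a ring hom into endomorphisms of rectangular matrices. -/
private def lmulHom {A : Type*} [CommRing A] {a b : ℕ} :
    Matrix (Fin a) (Fin a) A →+* Module.End A (Matrix (Fin a) (Fin b) A) where
  toFun U :=
    { toFun := fun X => U * X
      map_add' := fun X Y => Matrix.mul_add U X Y
      map_smul' := fun r X => (Matrix.mul_smul U r X) }
  map_one' := by ext X : 1; simp
  map_mul' U W := by ext X : 1; simp [Matrix.mul_assoc]
  map_zero' := by ext X : 1; simp
  map_add' U W := by ext X : 1; simp [Matrix.add_mul]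

private def rmul {A : Type*} [CommRing A] {a b : ℕ} (V : Matrix (Fin b) (Fin b) A) :
    Module.End A (Matrix (Fin a) (Fin b) A) where
  toFun X := X * V
  map_add' X Y := Matrix.add_mul X Y V
  map_smul' r X := Matrix.smul_mul r X V

private lemma rmul_pow {A : Type*} [CommRing A] {a b : ℕ} (V : Matrix (Fin b) (Fin b) A)
    (k : ℕ) : (rmul (a := a) V) ^ k = rmul (V ^ k) := by
  induction k with
  | zero => ext X : 1; simp [rmul]
  | succ k ih =>
    ext X : 1
    rw [pow_succ, pow_succ']
    simp only [Module.End.mul_apply, ih]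
    simp [rmul, Matrix.mul_assoc]

private lemma rmul_nilp {A : Type*} [CommRing A] {a b : ℕ} {V : Matrix (Fin b) (Fin b) A}
    (h : IsNilpotent V) : IsNilpotent (rmul (a := a) V) := by
  obtain ⟨k, hk⟩ := h
  refine ⟨k, ?_⟩
  rw [rmul_pow, hk]
  ext X : 1
  simp [rmul]

/-- Over an Artinian local ring `A`, if `α ≢ β mod m`, `U` and `V` are square matrices whose
reductions mod `m` are unipotent, and `N` satisfies `α·U·N = β·N·V`, then `N = 0`. -/
theorem matrix_eq_zero_of_twisted_commute
    (A : Type*) [CommRing A] [IsArtinianRing A] [IsLocalRing A]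
    (a b : ℕ) (ha : 1 ≤ a) (hb : 1 ≤ b)
    (α β : A) (hαβ : α - β ∉ IsLocalRing.maximalIdeal A)
    (U : Matrix (Fin a) (Fin a) A) (V : Matrix (Fin b) (Fin b) A)
    (hU : (U.map (IsLocalRing.residue A) - 1) ^ a = 0)
    (hV : (V.map (IsLocalRing.residue A) - 1) ^ b = 0)
    (N : Matrix (Fin a) (Fin b) A)
    (hN : α • (U * N) = β • (N * V)) :
    N = 0 := by
  -- nilpotency of U - 1 and V - 1 over A
  have hU' : IsNilpotent (U - 1) := by
    apply aux_nilp
    rwa [← RingHom.mapMatrix_apply, map_sub, map_one, RingHom.mapMatrix_apply]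
  have hV' : IsNilpotent (V - 1) := by
    apply aux_nilp
    rwa [← RingHom.mapMatrix_apply, map_sub, map_one, RingHom.mapMatrix_apply]
  set E := Module.End A (Matrix (Fin a) (Fin b) A)
  set L : E := lmulHom U with hL
  set R : E := rmul V with hR
  -- nilpotent parts
  have hLnil : IsNilpotent (L - 1) := by
    have : L - 1 = lmulHom (U - 1) := by rw [map_sub, map_one, hL]
    rw [this]
    exact hU'.map (lmulHom (b := b))
  have hRnil : IsNilpotent (R - 1) := by
    have : R - 1 = rmul (V - 1) := by
      ext X : 1
      show X * V - X = X * (V - 1)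
      rw [Matrix.mul_sub, Matrix.mul_one]
    rw [this]
    exact rmul_nilp hV'
  have hcomm : Commute (L - 1) (R - 1) := by
    have : Commute L R := by
      ext X : 1
      show U * (X * V) = (U * X) * V
      rw [Matrix.mul_assoc]
    exact (this.sub_left (Commute.one_left R)).sub_right
      ((Commute.one_right L).sub_left (Commute.one_left 1))
  have hSnil : IsNilpotent (α • (L - 1) - β • (R - 1)) := by
    refine Commute.isNilpotent_sub ?_ (hLnil.smul α) (hRnil.smul β)
    exact (hcomm.smul_left α).smul_right β
  have hunit : IsUnit ((α - β) • (1 : E)) := by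
    have h1 : IsUnit (α - β) := by
      by_contra h
      exact hαβ h
    have := h1.map (algebraMap A E)
    rwa [Algebra.algebraMap_eq_smul_one] at this
  have hTunit : IsUnit ((α • (L - 1) - β • (R - 1)) + (α - β) • (1 : E)) := by
    refine IsNilpotent.isUnit_add_right_of_commute hSnil hunit ?_
    refine Commute.sub_left ?_ ?_ <;>
      exact ((Commute.one_right _).smul_right _).smul_left _
  set T : E := (α • (L - 1) - β • (R - 1)) + (α - β) • (1 : E) with hT
  have hTN : T N = 0 := by
    have : T N = α • (U * N) - β • (N * V) := by
      simp only [hT, LinearMap.add_apply, LinearMap.sub_apply, LinearMap.smul_apply,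
        Module.End.one_apply, hL, hR]
      show α • (U * N - N) - β • (N * V - N) + (α - β) • N = _
      rw [smul_sub, smul_sub, sub_smul]
      abel
    rw [this, hN, sub_self]
  obtain ⟨t, ht⟩ := hTunit
  calc N = (1 : E) N := rfl
    _ = ((↑t⁻¹ * ↑t : E)) N := by rw [t.inv_mul]
    _ = (↑t⁻¹ : E) (T N) := by rw [ht]; rfl
    _ = 0 := by rw [hTN, map_zero]
end

section
/- Let 𝕜 be a field and let T : V → W be a linear map between finite-dimensional 𝕜-vector spaces. Suppose given filtrations by subspaces 0 = X₀ ⊆ X₁ ⊆ ⋯ ⊆ X_d = V and 0 = Y₀ ⊆ Y₁ ⊆ ⋯ ⊆ Y_{d−1} = W such that X_j = T⁻¹(Y_{j−1}) for all j = 1, …, d. If G : V → V is a linear automorphism with G(X_j) = X_j for all j, then there exists a linear automorphism H : W → W with H(Y_j) = Y_j for all j = 0, …, d−1 and H ∘ T = T ∘ G. -/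
/-!
The range `R = T(V)` meets each `Y_j` in `T(X_{j+1})`, and `G` preserves `ker T = X₁`, so
`T v ↦ T (G v)` is a well-defined automorphism of `R` preserving every `Y_j ∩ R`. Choosing a
complement `C` of `R` that splits every `Y_j` as `(Y_j ∩ R) ⊕ (Y_j ∩ C)` (possible because the
`Y_j` form a chain), `H` is this automorphism on `R` and the identity on `C`.
-/

section ModularLattice

variable {α : Type*} [Lattice α] [BoundedOrder α] [IsModularLattice α] [ComplementedLattice α]

theorem exists_le_disjoint_inf_sup_eq {R Y C : α} (hCR : Disjoint C R) (hCY : C ≤ Y) :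
    ∃ C', C ≤ C' ∧ C' ≤ Y ∧ Disjoint C' R ∧ Y ⊓ R ⊔ C' = Y := by
  obtain ⟨r, hr, hsup⟩ :=
    IsModularLattice.exists_disjoint_and_sup_eq (sup_le (inf_le_left : Y ⊓ R ≤ Y) hCY)
  rw [sup_assoc] at hsup
  have hC'Y : C ⊔ r ≤ Y := hsup ▸ le_sup_right
  have hdisj : Disjoint (Y ⊓ R) (C ⊔ r) :=
    (hCR.symm.mono_left inf_le_right).disjoint_sup_right_of_disjoint_sup_left hr
  refine ⟨C ⊔ r, le_sup_left, hC'Y, ?_, hsup⟩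
  rw [disjoint_iff_inf_le]
  calc (C ⊔ r) ⊓ R ≤ (Y ⊓ R) ⊓ (C ⊔ r) :=
        le_inf (inf_le_inf_right _ hC'Y) inf_le_left
    _ ≤ ⊥ := hdisj.le_bot

theorem exists_disjoint_forall_inf_sup_inf_eq (R : α) {Y : ℕ → α} {n : ℕ}
    (hY : ∀ j, j + 1 ≤ n → Y j ≤ Y (j + 1)) :
    ∃ C, Disjoint C R ∧ C ≤ Y n ∧ ∀ i ≤ n, Y i ⊓ R ⊔ Y i ⊓ C = Y i := by
  induction n with
  | zero =>
    obtain ⟨C, -, hCY, hCR, hsup⟩ :=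
      exists_le_disjoint_inf_sup_eq disjoint_bot_left (bot_le (a := Y 0))
    refine ⟨C, hCR, hCY, fun i hi => ?_⟩
    rw [Nat.le_zero.1 hi, inf_eq_right.2 hCY, hsup]
  | succ n ih =>
    obtain ⟨C, hCR, hCY, hsplit⟩ := ih fun j hj => hY j (by omega)
    obtain ⟨C', hCC', hC'Y, hC'R, hsup⟩ :=
      exists_le_disjoint_inf_sup_eq hCR (hCY.trans (hY n le_rfl))
    refine ⟨C', hC'R, hC'Y, fun i hi => ?_⟩
    rcases Nat.lt_or_ge i (n + 1) with hi' | hi'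
    · refine le_antisymm (sup_le inf_le_left inf_le_left) ?_
      calc Y i = Y i ⊓ R ⊔ Y i ⊓ C := (hsplit i (by omega)).symm
        _ ≤ Y i ⊓ R ⊔ Y i ⊓ C' := sup_le_sup_left (inf_le_inf_left _ hCC') _
    · rw [le_antisymm hi hi', inf_eq_right.2 hC'Y, hsup]

end ModularLattice

namespace LinearMap

variable {R V W : Type*} [Ring R] [AddCommGroup V] [Module R V] [AddCommGroup W] [Module R W]

noncomputable def rangeEquivOfMapKerEq (T : V →ₗ[R] W) (G : V ≃ₗ[R] V)
    (hG : (ker T).map (G : V →ₗ[R] V) = ker T) : range T ≃ₗ[R] range T :=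
  T.quotKerEquivRange.symm ≪≫ₗ Submodule.Quotient.equiv _ _ G hG ≪≫ₗ T.quotKerEquivRange

theorem rangeEquivOfMapKerEq_apply (T : V →ₗ[R] W) (G : V ≃ₗ[R] V)
    (hG : (ker T).map (G : V →ₗ[R] V) = ker T) (v : V) :
    (T.rangeEquivOfMapKerEq G hG (T.rangeRestrict v) : W) = T (G v) := by
  have hv : T.quotKerEquivRange.symm (T.rangeRestrict v) = Submodule.Quotient.mk v :=
    T.quotKerEquivRange.symm_apply_eq.2 rfl
  simp [rangeEquivOfMapKerEq, hv]

end LinearMap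

namespace LinearEquiv

variable {R M : Type*} [Ring R] [AddCommGroup M] [Module R M] {p q : Submodule R M}

noncomputable def extendOfIsCompl (h : IsCompl p q) (φ : p ≃ₗ[R] p) : M ≃ₗ[R] M :=
  (Submodule.prodEquivOfIsCompl p q h).symm ≪≫ₗ φ.prodCongr (refl R q) ≪≫ₗ
    Submodule.prodEquivOfIsCompl p q h

theorem extendOfIsCompl_apply_left (h : IsCompl p q) (φ : p ≃ₗ[R] p) (x : p) :
    extendOfIsCompl h φ x = φ x := by
  simp [extendOfIsCompl, Submodule.coe_prodEquivOfIsCompl']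

theorem extendOfIsCompl_apply_right (h : IsCompl p q) (φ : p ≃ₗ[R] p) (y : q) :
    extendOfIsCompl h φ y = y := by
  simp [extendOfIsCompl, Submodule.coe_prodEquivOfIsCompl']

theorem map_extendOfIsCompl_of_le_right (h : IsCompl p q) (φ : p ≃ₗ[R] p)
    {s : Submodule R M} (hs : s ≤ q) : s.map (extendOfIsCompl h φ : M →ₗ[R] M) = s := by
  have : (extendOfIsCompl h φ : M →ₗ[R] M) ∘ₗ s.subtype = s.subtype := by
    ext x
    exact extendOfIsCompl_apply_right h φ ⟨x, hs x.2⟩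
  rw [← Submodule.range_subtype s, ← LinearMap.range_comp, this]

end LinearEquiv

theorem exists_automorphism_compatible_with_filtration_general
    (𝕜 : Type*) [Field 𝕜]
    (V W : Type*) [AddCommGroup V] [Module 𝕜 V]
    [AddCommGroup W] [Module 𝕜 W]
    (T : V →ₗ[𝕜] W) (d : ℕ) (hd : 1 ≤ d)
    (Xf : ℕ → Submodule 𝕜 V) (Yf : ℕ → Submodule 𝕜 W)
    (hY0 : Yf 0 = ⊥) (hYtop : Yf (d - 1) = ⊤)
    (hYmono : ∀ j, j + 1 ≤ d - 1 → Yf j ≤ Yf (j + 1))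
    (hcomp : ∀ j, 1 ≤ j → j ≤ d → Xf j = Submodule.comap T (Yf (j - 1)))
    (G : V ≃ₗ[𝕜] V)
    (hG : ∀ j, j ≤ d → Submodule.map (G : V →ₗ[𝕜] V) (Xf j) = Xf j) :
    ∃ H : W ≃ₗ[𝕜] W,
      (∀ j, j ≤ d - 1 → Submodule.map (H : W →ₗ[𝕜] W) (Yf j) = Yf j) ∧
      ∀ v : V, H (T v) = T (G v) := by
  have hker : (LinearMap.ker T).map (G : V →ₗ[𝕜] V) = LinearMap.ker T := by
    simpa [← Submodule.comap_bot, ← hY0, ← hcomp 1 le_rfl hd] using hG 1 hd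
  obtain ⟨C, hCR, -, hsplit⟩ := exists_disjoint_forall_inf_sup_inf_eq (LinearMap.range T) hYmono
  have hRC : IsCompl (LinearMap.range T) C :=
    ⟨hCR.symm, codisjoint_iff.2 (by simpa [hYtop] using hsplit (d - 1) le_rfl)⟩
  set H := LinearEquiv.extendOfIsCompl hRC (T.rangeEquivOfMapKerEq G hker)
  have hHT : (H : W →ₗ[𝕜] W) ∘ₗ T = T ∘ₗ (G : V →ₗ[𝕜] V) := by
    ext v
    exact (LinearEquiv.extendOfIsCompl_apply_left hRC _ (T.rangeRestrict v)).trans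
      (T.rangeEquivOfMapKerEq_apply G hker v)
  refine ⟨H, fun j hj => ?_, fun v => LinearMap.congr_fun hHT v⟩
  have hYR : Yf j ⊓ LinearMap.range T = (Xf (j + 1)).map T := by
    rw [hcomp (j + 1) (by omega) (by omega), Nat.add_sub_cancel, Submodule.map_comap_eq,
      inf_comm]
  rw [← hsplit j hj, Submodule.map_sup, hYR, ← Submodule.map_comp, hHT, Submodule.map_comp,
    hG (j + 1) (by omega), LinearEquiv.map_extendOfIsCompl_of_le_right _ _ inf_le_right]

/-- Given `T : V → W`, filtrations `0 = X₀ ⊆ ⋯ ⊆ X_d = V` and `0 = Y₀ ⊆ ⋯ ⊆ Y_{d−1} = W`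
with `X_j = T⁻¹(Y_{j−1})` for `j = 1, …, d`, any automorphism `G` of `V` preserving the `X_j`
extends to an automorphism `H` of `W` preserving the `Y_j` with `H ∘ T = T ∘ G`. -/
theorem exists_automorphism_compatible_with_filtration
    (𝕜 : Type*) [Field 𝕜]
    (V W : Type*) [AddCommGroup V] [Module 𝕜 V] [FiniteDimensional 𝕜 V]
    [AddCommGroup W] [Module 𝕜 W] [FiniteDimensional 𝕜 W]
    (T : V →ₗ[𝕜] W) (d : ℕ) (hd : 1 ≤ d)
    (Xf : ℕ → Submodule 𝕜 V) (Yf : ℕ → Submodule 𝕜 W)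
    (hX0 : Xf 0 = ⊥) (hXd : Xf d = ⊤)
    (hXmono : ∀ j, j + 1 ≤ d → Xf j ≤ Xf (j + 1))
    (hY0 : Yf 0 = ⊥) (hYtop : Yf (d - 1) = ⊤)
    (hYmono : ∀ j, j + 1 ≤ d - 1 → Yf j ≤ Yf (j + 1))
    (hcomp : ∀ j, 1 ≤ j → j ≤ d → Xf j = Submodule.comap T (Yf (j - 1)))
    (G : V ≃ₗ[𝕜] V)
    (hG : ∀ j, j ≤ d → Submodule.map (G : V →ₗ[𝕜] V) (Xf j) = Xf j) :
    ∃ H : W ≃ₗ[𝕜] W,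
      (∀ j, j ≤ d - 1 → Submodule.map (H : W →ₗ[𝕜] W) (Yf j) = Yf j) ∧
      ∀ v : V, H (T v) = T (G v) :=
  exists_automorphism_compatible_with_filtration_general 𝕜 V W T d hd Xf Yf hY0 hYtop hYmono hcomp G
    hG
end

section
/- Let 𝕜 be a field, k ≥ 2 an integer, and n₁, …, n_k positive integers. Let N_i and N′_i be n_i × n_{i+1} matrices over 𝕜 for i = 1, …, k−1. Then there exist invertible matrices g_i ∈ GL_{n_i}(𝕜) for i = 1, …, k such that N′_i = g_i · N_i · g_{i+1}⁻¹ for all i = 1, …, k−1, if and only if for all indices 1 ≤ j ≤ j′ ≤ k−1 one has rank(N_j · N_{j+1} ⋯ N_{j′}) = rank(N′_j · N′_{j+1} ⋯ N′_{j′}). -/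
/-!
Let `f i` be the map of `N i`. The isomorphisms `g 0, g 1, …` are chosen one vertex at a time,
keeping the invariant that `g c` carries the flag of images `im (f c ∘ ⋯ ∘ f (c + m - 1))` onto
the corresponding flag of the second chain; the rank hypothesis says exactly that these flags
have equal dimensions. To pass from `c` to `c + 1` one needs `u` with `f' c ∘ u = g c ∘ f c`
carrying one flag at `c + 1` onto the other. Since `g c ∘ f c` and `f' c` map corresponding
members of these flags onto the same subspaces, such a `u` is built from the smallest member of
the flag upwards, each time extending an isomorphism given on a subspace.
-/

open Matrix

/-- `chainProd n N j m` is the product `N_j * N_{j+1} * ⋯ * N_{j+m}` of a chain of matrices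
`N_i : Matrix (Fin (n i)) (Fin (n (i+1))) 𝕜`. -/
def chainProd {𝕜 : Type*} [Field 𝕜] (n : ℕ → ℕ)
    (N : ∀ i : ℕ, Matrix (Fin (n i)) (Fin (n (i + 1))) 𝕜) :
    (j m : ℕ) → Matrix (Fin (n j)) (Fin (n (j + m + 1))) 𝕜
  | j, 0 => N j
  | j, m + 1 => chainProd n N j m * N (j + m + 1)

open Module LinearMap Submodule

section Ring

variable {R U U' X M : Type*} [Ring R] [AddCommGroup U] [Module R U] [AddCommGroup U']
  [Module R U'] [AddCommGroup X] [Module R X] [AddCommGroup M] [Module R M]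

theorem LinearMap.injective_of_comp_eq {F : U →ₗ[R] X} {G : U' →ₗ[R] X} {u : U →ₗ[R] U'}
    (hu : G ∘ₗ u = F) {ι : M →ₗ[R] U} (hker : ker F ≤ range ι)
    (hinj : Function.Injective (u ∘ₗ ι)) : Function.Injective u := by
  rw [← ker_eq_bot, eq_bot_iff]
  intro x hx
  obtain ⟨m, rfl⟩ := hker (hu ▸ ker_le_ker_comp u G hx)
  have hm : m = 0 := hinj (by simpa using hx)
  simp [hm]

theorem Submodule.injective_coprod_subtype {p q : Submodule R U} (h : Disjoint p q) :
    Function.Injective (p.subtype.coprod q.subtype) := by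
  rw [← ker_eq_bot, ker_coprod_of_disjoint_range _ _ (by simpa using h)]
  simp

end Ring

section DivisionRing

variable {𝕜 U U' X M : Type*} [DivisionRing 𝕜]
  [AddCommGroup U] [Module 𝕜 U] [AddCommGroup U'] [Module 𝕜 U']
  [AddCommGroup X] [Module 𝕜 X] [AddCommGroup M] [Module 𝕜 M]

theorem LinearMap.exists_extend_of_comp_eq {F : U →ₗ[𝕜] X} {G : U' →ₗ[𝕜] X}
    (hFG : range F ≤ range G) {ι : M →ₗ[𝕜] U} (hι : Function.Injective ι) {φ : M →ₗ[𝕜] U'}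
    (hφ : G ∘ₗ φ = F ∘ₗ ι) : ∃ u : U →ₗ[𝕜] U', u ∘ₗ ι = φ ∧ G ∘ₗ u = F := by
  obtain ⟨s, hs⟩ := Module.projective_lifting_property G.rangeRestrict
    (F.codRestrict (range G) fun x => hFG (mem_range_self F x)) G.surjective_rangeRestrict
  replace hs : G ∘ₗ s = F := congrArg ((range G).subtype ∘ₗ ·) hs
  obtain ⟨r, hr⟩ := ι.exists_leftInverse_of_injective (ker_eq_bot.mpr hι)
  refine ⟨s + (φ - s ∘ₗ ι) ∘ₗ r, ?_, ?_⟩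
  · rw [add_comp, comp_assoc, hr, comp_id, add_sub_cancel]
  · rw [comp_add, ← comp_assoc, comp_sub, hφ, ← comp_assoc, hs, sub_self, zero_comp, add_zero]

theorem Submodule.finrank_inf_ker_add_finrank_map [FiniteDimensional 𝕜 U] (W : Submodule 𝕜 U)
    (F : U →ₗ[𝕜] X) : finrank 𝕜 ↥(W ⊓ ker F) + finrank 𝕜 ↥(W.map F) = finrank 𝕜 W := by
  rw [← (F.domRestrict W).finrank_range_add_finrank_ker, range_domRestrict, ker_domRestrict,
    ← finrank_map_subtype_eq, map_comap_subtype, add_comm]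

theorem Submodule.exists_ker_complement [FiniteDimensional 𝕜 U] (W : Submodule 𝕜 U)
    (F : U →ₗ[𝕜] X) : ∃ A ≤ ker F, Disjoint W A ∧ ker F ≤ W ⊔ A ∧
      finrank 𝕜 A + finrank 𝕜 W = finrank 𝕜 (ker F) + finrank 𝕜 (W.map F) := by
  obtain ⟨A, hWA, hA⟩ :=
    IsModularLattice.exists_disjoint_and_sup_eq (inf_le_right : W ⊓ ker F ≤ ker F)
  have hAker : A ≤ ker F := hA ▸ le_sup_right
  refine ⟨A, hAker, ?_, hA ▸ sup_le_sup_right inf_le_left A, ?_⟩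
  · rw [disjoint_iff, ← inf_eq_right.mpr hAker, ← inf_assoc]
    exact hWA.eq_bot
  · have h := finrank_sup_add_finrank_inf_eq (W ⊓ ker F) A
    rw [hA, hWA.eq_bot, finrank_bot] at h
    have := finrank_inf_ker_add_finrank_map W F
    omega

variable [FiniteDimensional 𝕜 U] [FiniteDimensional 𝕜 U'] {F : U →ₗ[𝕜] X} {G : U' →ₗ[𝕜] X}

theorem LinearMap.exists_linearEquiv_extend_of_comp_eq (hdim : finrank 𝕜 U = finrank 𝕜 U')
    (hrange : range F = range G) {W : Submodule 𝕜 U} {W' : Submodule 𝕜 U'} (u₀ : W ≃ₗ[𝕜] W')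
    (hu₀ : G ∘ₗ W'.subtype ∘ₗ u₀ = F ∘ₗ W.subtype) :
    ∃ u : U ≃ₗ[𝕜] U', G ∘ₗ u = F ∧ u ∘ₗ W.subtype = W'.subtype ∘ₗ u₀ := by
  -- `u` is `u₀` on `W` and any isomorphism `A ≃ A'` between complements of `W ⊓ ker F` in
  -- `ker F` and of `W' ⊓ ker G` in `ker G`; it is injective because it is so on `W ⊔ A ≥ ker F`.
  obtain ⟨A, hAker, hdisj, hkerA, hA⟩ := W.exists_ker_complement F
  obtain ⟨A', hA'ker, hdisj', -, hA'⟩ := W'.exists_ker_complement G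
  have hmap : W.map F = W'.map G := by
    rw [← range_subtype W, ← range_subtype W', ← range_comp, ← range_comp, ← hu₀,
      ← comp_assoc, range_comp_of_range_eq_top _ u₀.range]
  have hAA' : finrank 𝕜 A = finrank 𝕜 A' := by
    have hF := F.finrank_range_add_finrank_ker
    have hG := G.finrank_range_add_finrank_ker
    rw [hrange] at hF
    rw [hmap] at hA
    have := u₀.finrank_eq
    omega
  obtain ⟨e⟩ : Nonempty (A ≃ₗ[𝕜] A') := ⟨.ofFinrankEq A A' hAA'⟩
  have hφ : G ∘ₗ (W'.subtype.coprod A'.subtype ∘ₗ (u₀.prodCongr e).toLinearMap) =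
      F ∘ₗ W.subtype.coprod A.subtype := by
    ext x
    · simpa using congr($hu₀ x)
    · simp [mem_ker.mp (hAker x.2), mem_ker.mp (hA'ker (e x).2)]
  obtain ⟨u, huι, hu⟩ := exists_extend_of_comp_eq hrange.le (injective_coprod_subtype hdisj) hφ
  have hinj : Function.Injective u := by
    refine injective_of_comp_eq hu (ι := W.subtype.coprod A.subtype) ?_ ?_
    · rwa [← sup_eq_range]
    · rw [huι]
      exact (injective_coprod_subtype hdisj').comp (u₀.prodCongr e).injective
  refine ⟨u.linearEquivOfInjective hinj hdim, hu, ?_⟩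
  ext x
  simpa using congr($huι (x, 0))

theorem LinearMap.exists_linearEquiv_comp_eq_and_map_eq (hdim : finrank 𝕜 U = finrank 𝕜 U')
    (hrange : range F = range G) (s : ℕ) {T : ℕ → Submodule 𝕜 U} {T' : ℕ → Submodule 𝕜 U'}
    (hT : Antitone T) (hT' : Antitone T')
    (hfinrank : ∀ t < s, finrank 𝕜 (T t) = finrank 𝕜 (T' t))
    (hmap : ∀ t < s, (T t).map F = (T' t).map G) :
    ∃ u : U ≃ₗ[𝕜] U', G ∘ₗ u = F ∧ ∀ t < s, (T t).map (u : U →ₗ[𝕜] U') = T' t := by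
  induction s generalizing U U' with
  | zero =>
    obtain ⟨u, hu, -⟩ := exists_linearEquiv_extend_of_comp_eq hdim hrange
      (.ofSubsingleton (⊥ : Submodule 𝕜 U) (⊥ : Submodule 𝕜 U')) (Subsingleton.elim _ _)
    exact ⟨u, hu, nofun⟩
  | succ s ih =>
    have h0 : ∀ t, T t ≤ T 0 := fun t => hT (Nat.zero_le t)
    have h0' : ∀ t, T' t ≤ T' 0 := fun t => hT' (Nat.zero_le t)
    obtain ⟨u₀, hu₀, hu₀T⟩ := ih (F := F ∘ₗ (T 0).subtype) (G := G ∘ₗ (T' 0).subtype)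
      (hfinrank 0 s.succ_pos)
      (by rw [range_comp, range_comp, range_subtype, range_subtype, hmap 0 s.succ_pos])
      (T := fun t => (T (t + 1)).comap (T 0).subtype)
      (T' := fun t => (T' (t + 1)).comap (T' 0).subtype)
      (fun _ _ h => comap_mono (hT (Nat.succ_le_succ h)))
      (fun _ _ h => comap_mono (hT' (Nat.succ_le_succ h)))
      (fun t ht => by
        rw [(comapSubtypeEquivOfLe (h0 _)).finrank_eq, (comapSubtypeEquivOfLe (h0' _)).finrank_eq]
        exact hfinrank (t + 1) (by omega))
      (fun t ht => by
        rw [map_comp, map_comp, map_comap_subtype, map_comap_subtype, inf_eq_right.mpr (h0 _),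
          inf_eq_right.mpr (h0' _)]
        exact hmap (t + 1) (by omega))
    obtain ⟨u, hu, huext⟩ := exists_linearEquiv_extend_of_comp_eq hdim hrange u₀ hu₀
    refine ⟨u, hu, fun t ht => ?_⟩
    have hmap_u : (T t).map (u : U →ₗ[𝕜] U') =
        (((T t).comap (T 0).subtype).map (u₀ : T 0 →ₗ[𝕜] T' 0)).map (T' 0).subtype := by
      conv_lhs => rw [← inf_eq_right.mpr (h0 t), ← map_comap_subtype, ← map_comp]
      rw [huext, map_comp]
    rcases t with _ | t
    · rw [hmap_u, comap_subtype_self, Submodule.map_top, LinearEquiv.range, Submodule.map_top,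
        range_subtype]
    · rw [hmap_u, hu₀T t (by omega), map_comap_subtype, inf_eq_right.mpr (h0' _)]

end DivisionRing

section Chain

variable {𝕜 : Type*} [DivisionRing 𝕜] {V : ℕ → Type*} [∀ i, AddCommGroup (V i)]
  [∀ i, Module 𝕜 (V i)]

/-- The image of `S (c + m)` under `f c ∘ ⋯ ∘ f (c + m - 1)`. Recursing at the left end keeps
the codomain `V c` out of the arithmetic on indices. -/
def chainImage (f : ∀ i, V (i + 1) →ₗ[𝕜] V i) (S : ∀ i, Submodule 𝕜 (V i)) :
    (c m : ℕ) → Submodule 𝕜 (V c)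
  | c, 0 => S c
  | c, m + 1 => (chainImage f S (c + 1) m).map (f c)

variable (f f' : ∀ i, V (i + 1) →ₗ[𝕜] V i)

theorem chainImage_succ' (S : ∀ i, Submodule 𝕜 (V i)) (c m : ℕ) :
    chainImage f S c (m + 1) = chainImage f (fun i => (S (i + 1)).map (f i)) c m := by
  induction m generalizing c with
  | zero => rfl
  | succ m ih => exact congrArg (map (f c)) (ih (c + 1))

theorem antitone_chainImage_top (c : ℕ) : Antitone (chainImage f ⊤ c) := by
  refine antitone_nat_of_succ_le fun m => ?_
  induction m generalizing c with
  | zero => exact le_top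
  | succ m ih => exact map_mono (ih (c + 1))

variable {f f'}

theorem map_chainImage_top {L : ℕ} {g : ∀ i, V i ≃ₗ[𝕜] V i}
    (hg : ∀ i < L, f' i ∘ₗ g (i + 1) = g i ∘ₗ f i) {c m : ℕ} (h : c + m ≤ L) :
    (chainImage f ⊤ c m).map (g c : V c →ₗ[𝕜] V c) = chainImage f' ⊤ c m := by
  induction m generalizing c with
  | zero => exact (Submodule.map_top _).trans (g c).range
  | succ m ih =>
    change ((chainImage f ⊤ (c + 1) m).map (f c)).map _ = (chainImage f' ⊤ (c + 1) m).map (f' c)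
    rw [← map_comp, ← hg c (by omega), map_comp, ih (by omega)]

variable [∀ i, FiniteDimensional 𝕜 (V i)]

theorem exists_linearEquiv_chain_of_finrank_eq {L : ℕ}
    (hrank : ∀ c m, c + m ≤ L →
      finrank 𝕜 (chainImage f ⊤ c m) = finrank 𝕜 (chainImage f' ⊤ c m))
    (c : ℕ) (hc : c ≤ L) :
    ∃ g : ∀ i, V i ≃ₗ[𝕜] V i, (∀ i < c, f' i ∘ₗ g (i + 1) = g i ∘ₗ f i) ∧
      ∀ m, c + m ≤ L → (chainImage f ⊤ c m).map (g c : V c →ₗ[𝕜] V c) = chainImage f' ⊤ c m := by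
  induction c with
  | zero =>
    obtain ⟨u, -, hu⟩ := exists_linearEquiv_comp_eq_and_map_eq (F := (0 : V 0 →ₗ[𝕜] V 0))
      (G := 0) rfl rfl (L + 1) (antitone_chainImage_top f 0) (antitone_chainImage_top f' 0)
      (fun t ht => hrank 0 t (by omega)) (fun t _ => by simp only [Submodule.map_zero])
    refine ⟨Function.update (fun i => LinearEquiv.refl 𝕜 (V i)) 0 u, nofun, fun m hm => ?_⟩
    simpa using hu m (by omega)
  | succ c ih =>
    obtain ⟨g, hg, hgc⟩ := ih (by omega)
    obtain ⟨u, hu, huc⟩ := exists_linearEquiv_comp_eq_and_map_eq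
      (F := (g c : V c →ₗ[𝕜] V c) ∘ₗ f c) (G := f' c) rfl
      (by simpa [chainImage, range_comp] using hgc 1 (by omega)) (L - c)
      (antitone_chainImage_top f (c + 1)) (antitone_chainImage_top f' (c + 1))
      (fun t ht => hrank (c + 1) t (by omega))
      (fun t ht => by rw [map_comp]; exact hgc (t + 1) (by omega))
    refine ⟨Function.update g (c + 1) u, fun i hi => ?_, fun m hm => ?_⟩
    · rcases Nat.lt_succ_iff_lt_or_eq.mp hi with hi | rfl
      · simp [Function.update_of_ne (show i ≠ c + 1 by omega),
          Function.update_of_ne (show i + 1 ≠ c + 1 by omega), hg i hi]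
      · simp [hu]
    · simpa using huc m (by omega)

theorem exists_linearEquiv_chain_iff (L : ℕ) :
    (∃ g : ∀ i, V i ≃ₗ[𝕜] V i, ∀ i < L, f' i ∘ₗ g (i + 1) = g i ∘ₗ f i) ↔
      ∀ c m, c + m ≤ L → finrank 𝕜 (chainImage f ⊤ c m) = finrank 𝕜 (chainImage f' ⊤ c m) :=
  ⟨fun ⟨g, hg⟩ c m h => by rw [← map_chainImage_top hg h, LinearEquiv.finrank_map_eq],
    fun h => (exists_linearEquiv_chain_of_finrank_eq h L le_rfl).imp fun _ hg => hg.1⟩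

end Chain

section MatrixChain

variable {𝕜 : Type*} [Field 𝕜] {n : ℕ → ℕ}

/-- Taking a whole family `S` rather than `⊤` lets the induction move a factor from one end of
the product to the other without casting between `Fin (n (j + (m + 1) + 1))` and
`Fin (n (j + 1 + m + 1))`. -/
theorem map_mulVecLin_chainProd (N : ∀ i, Matrix (Fin (n i)) (Fin (n (i + 1))) 𝕜) (j m : ℕ)
    (S : ∀ i, Submodule 𝕜 (Fin (n i) → 𝕜)) :
    (S (j + m + 1)).map (chainProd n N j m).mulVecLin =
      chainImage (fun i => (N i).mulVecLin) S j (m + 1) := by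
  induction m generalizing S with
  | zero => rfl
  | succ m ih =>
    rw [chainProd, mulVecLin_mul, map_comp, chainImage_succ']
    exact ih fun i => (S (i + 1)).map (N i).mulVecLin

theorem rank_chainProd (N : ∀ i, Matrix (Fin (n i)) (Fin (n (i + 1))) 𝕜) (j m : ℕ) :
    (chainProd n N j m).rank =
      finrank 𝕜 (chainImage (V := fun i => Fin (n i) → 𝕜) (fun i => (N i).mulVecLin) ⊤ j (m + 1)) := by
  rw [Matrix.rank, ← map_mulVecLin_chainProd, Pi.top_apply, Submodule.map_top]

theorem forall_rank_chainProd_eq_iff (N N' : ∀ i, Matrix (Fin (n i)) (Fin (n (i + 1))) 𝕜)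
    (L : ℕ) :
    (∀ j m, j + m + 1 ≤ L → (chainProd n N j m).rank = (chainProd n N' j m).rank) ↔
      ∀ c m, c + m ≤ L →
        finrank 𝕜 (chainImage (V := fun i => Fin (n i) → 𝕜) (fun i => (N i).mulVecLin) ⊤ c m) =
          finrank 𝕜 (chainImage (V := fun i => Fin (n i) → 𝕜) (fun i => (N' i).mulVecLin) ⊤ c m) := by
  refine ⟨fun h c m hcm => ?_, fun h j m hjm => ?_⟩
  · rcases m with _ | m
    · rfl
    · rw [← rank_chainProd, ← rank_chainProd]
      exact h c m hcm
  · rw [rank_chainProd, rank_chainProd]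
    exact h j (m + 1) (by omega)

end MatrixChain

theorem Matrix.eq_mul_mul_inv_iff_mulVecLin {𝕜 ι κ : Type*} [Field 𝕜] [Fintype ι]
    [DecidableEq ι] [Fintype κ] [DecidableEq κ] {N N' : Matrix ι κ 𝕜} (P : GL ι 𝕜) (Q : GL κ 𝕜) :
    N' = (P : Matrix ι ι 𝕜) * N * (↑Q⁻¹ : Matrix κ κ 𝕜) ↔
      N'.mulVecLin ∘ₗ (Q : Matrix κ κ 𝕜).mulVecLin =
        (P : Matrix ι ι 𝕜).mulVecLin ∘ₗ N.mulVecLin := by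
  rw [← mulVecLin_mul, ← mulVecLin_mul, ← toLin'_apply', ← toLin'_apply', toLin'.injective.eq_iff]
  constructor
  · rintro rfl
    rw [Matrix.mul_assoc, Units.inv_mul, Matrix.mul_one]
  · intro h
    rw [← h, Matrix.mul_assoc, Units.mul_inv, Matrix.mul_one]

theorem chain_conjugate_iff_rank_eq_general
    (𝕜 : Type*) [Field 𝕜] (k : ℕ)
    (n : ℕ → ℕ)
    (N N' : ∀ i : ℕ, Matrix (Fin (n i)) (Fin (n (i + 1))) 𝕜) :
    (∃ g : ∀ i : ℕ, GL (Fin (n i)) 𝕜,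
        ∀ i : ℕ, i + 1 ≤ k - 1 →
          N' i = (g i : Matrix (Fin (n i)) (Fin (n i)) 𝕜) * N i *
            (((g (i + 1))⁻¹ : GL (Fin (n (i + 1))) 𝕜) :
              Matrix (Fin (n (i + 1))) (Fin (n (i + 1))) 𝕜)) ↔
    (∀ j m : ℕ, j + m + 1 ≤ k - 1 →
        (chainProd n N j m).rank = (chainProd n N' j m).rank) := by
  let e (i : ℕ) : GL (Fin (n i)) 𝕜 ≃* ((Fin (n i) → 𝕜) ≃ₗ[𝕜] (Fin (n i) → 𝕜)) :=
    GeneralLinearGroup.toLin.trans (LinearMap.GeneralLinearGroup.generalLinearEquiv _ _)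
  rw [forall_rank_chainProd_eq_iff, ← exists_linearEquiv_chain_iff]
  constructor
  · rintro ⟨g, hg⟩
    exact ⟨fun i => e i (g i), fun i hi => (eq_mul_mul_inv_iff_mulVecLin _ _).1 (hg i (by omega))⟩
  · rintro ⟨g, hg⟩
    refine ⟨fun i => (e i).symm (g i), fun i hi => (eq_mul_mul_inv_iff_mulVecLin _ _).2 ?_⟩
    have hgi := hg i (by omega)
    rwa [← (e i).apply_symm_apply (g i), ← (e (i + 1)).apply_symm_apply (g (i + 1))] at hgi

/-- Two chains of matrices `(N_i)` and `(N'_i)` (with `N_i` of size `n_i × n_{i+1}`,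
for `i` ranging over the first `k−1` indices) are simultaneously conjugate, i.e.
`N'_i = g_i · N_i · g_{i+1}⁻¹` for invertible `g_i`, if and only if all products of
consecutive chains of the `N_i` and of the `N'_i` have equal ranks. -/
theorem chain_conjugate_iff_rank_eq
    (𝕜 : Type*) [Field 𝕜] (k : ℕ) (hk : 2 ≤ k)
    (n : ℕ → ℕ) (hn : ∀ i, i < k → 0 < n i)
    (N N' : ∀ i : ℕ, Matrix (Fin (n i)) (Fin (n (i + 1))) 𝕜) :
    (∃ g : ∀ i : ℕ, GL (Fin (n i)) 𝕜,
        ∀ i : ℕ, i + 1 ≤ k - 1 →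
          N' i = (g i : Matrix (Fin (n i)) (Fin (n i)) 𝕜) * N i *
            (((g (i + 1))⁻¹ : GL (Fin (n (i + 1))) 𝕜) :
              Matrix (Fin (n (i + 1))) (Fin (n (i + 1))) 𝕜)) ↔
    (∀ j m : ℕ, j + m + 1 ≤ k - 1 →
        (chainProd n N j m).rank = (chainProd n N' j m).rank) :=
  chain_conjugate_iff_rank_eq_general 𝕜 k n N N'
end

section
/- Let K be an algebraically closed field, n ≥ 1 an integer, and q ≥ 2 an integer. Suppose Φ and Σ are invertible n×n matrices over K satisfying Φ·Σ·Φ⁻¹ = Σ^q. Then for every eigenvalue λ of Σ (i.e. every root of the characteristic polynomial of Σ) there exists an integer i with 1 ≤ i ≤ n such that λ^{qⁱ − 1} = 1. In particular, every eigenvalue of Σ is an M-th root of unity, where M = ∏_{i=1}^{n} (qⁱ − 1). -/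
/-!
Conjugation preserves the spectrum and, over an algebraically closed field, the spectral mapping
theorem gives `σ(Σ^q) = σ(Σ)^q`. Hence `x ↦ x ^ q` maps the spectrum of `Σ`, a set of at most `n`
elements, onto itself, so it permutes it: every eigenvalue `λ` satisfies `λ ^ (q ^ m) = λ` for some
`1 ≤ m ≤ n`, and `λ ≠ 0` because `Σ` is invertible.
-/

open Matrix Polynomial Function Set

theorem Set.Finite.exists_iterate_eq_self_of_image_eq {α : Type*} {s : Set α} (hs : s.Finite)
    {f : α → α} (hf : f '' s = s) {x : α} (hx : x ∈ s) :
    ∃ m, 0 < m ∧ m ≤ s.ncard ∧ f^[m] x = x := by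
  have hmaps : MapsTo f s s := mapsTo_iff_image_subset.mpr hf.subset
  have : Finite s := hs
  let := hs.fintype
  have hinj : Injective (hmaps.restrict f s s) :=
    Finite.injective_iff_surjective.mpr (hmaps.restrict_surjective_iff.mpr hf.superset)
  refine ⟨minimalPeriod (hmaps.restrict f s s) ⟨x, hx⟩,
    minimalPeriod_pos_of_mem_periodicPts (hinj.mem_periodicPts _), ?_, ?_⟩
  · rw [← Nat.card_coe_set_eq, Nat.card_eq_fintype_card]
    exact minimalPeriod_le_card
  · have hperiod := congrArg Subtype.val
      (iterate_minimalPeriod (f := hmaps.restrict f s s) (x := ⟨x, hx⟩))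
    rwa [hmaps.coe_iterate_restrict] at hperiod

theorem spectrum.image_pow_eq_of_units_conj {K A : Type*} [Field K] [IsAlgClosed K] [Ring A]
    [Algebra K A] {a : A} (u : Aˣ) {q : ℕ} (hq : 0 < q) (h : u * a * ↑u⁻¹ = a ^ q) :
    (· ^ q) '' spectrum K a = spectrum K a := by
  rw [← spectrum.map_pow_of_pos a hq, ← h, spectrum.units_conjugate]

theorem Matrix.ncard_spectrum_le {K ι : Type*} [Field K] [Fintype ι] [DecidableEq ι]
    (A : Matrix ι ι K) : (spectrum K A).ncard ≤ Fintype.card ι := by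
  classical
  have hroots : spectrum K A = A.charpoly.roots.toFinset := by
    ext
    simp [mem_spectrum_iff_isRoot_charpoly, A.charpoly_monic.ne_zero]
  rw [hroots, ncard_coe_finset, ← A.charpoly_natDegree_eq_dim]
  exact (Multiset.toFinset_card_le _).trans (card_roots' _)

theorem pow_pred_eq_one_of_pow_eq_self {M₀ : Type*} [MonoidWithZero M₀]
    [IsRightCancelMulZero M₀] {a : M₀} (ha : a ≠ 0) {k : ℕ} (hk : a ^ k = a) :
    a ^ (k - 1) = 1 := by
  cases k with
  | zero => simp
  | succ k => rwa [pow_succ, mul_eq_right₀ ha] at hk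

theorem eigenvalue_root_of_unity_of_conj_pow_general
    (K : Type*) [Field K] [IsAlgClosed K]
    (n : ℕ) (q : ℕ) (hq : 2 ≤ q)
    (Phi Sig : Matrix (Fin n) (Fin n) K) (hPhi : IsUnit Phi) (hSig : IsUnit Sig)
    (hconj : Phi * Sig * Phi⁻¹ = Sig ^ q) :
    ∀ lam : K, (Matrix.charpoly Sig).IsRoot lam →
      (∃ i : ℕ, 1 ≤ i ∧ i ≤ n ∧ lam ^ (q ^ i - 1) = 1) ∧
      lam ^ (∏ i ∈ Finset.Icc 1 n, (q ^ i - 1)) = 1 := by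
  intro lam hlam
  have hlamσ : lam ∈ spectrum K Sig := mem_spectrum_iff_isRoot_charpoly.mpr hlam
  have hlam0 : lam ≠ 0 := fun h ↦ (spectrum.zero_mem_iff K).mp (h ▸ hlamσ) hSig
  have hpow : (· ^ q) '' spectrum K Sig = spectrum K Sig :=
    spectrum.image_pow_eq_of_units_conj hPhi.unit (by omega) (by simpa [coe_units_inv] using hconj)
  obtain ⟨m, hm0, hmσ, hm⟩ := Sig.finite_spectrum.exists_iterate_eq_self_of_image_eq hpow hlamσ
  rw [pow_iterate] at hm
  have hroot : lam ^ (q ^ m - 1) = 1 := pow_pred_eq_one_of_pow_eq_self hlam0 hm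
  have hmn : m ≤ n := by simpa using hmσ.trans Sig.ncard_spectrum_le
  refine ⟨⟨m, hm0, hmn, hroot⟩, ?_⟩
  obtain ⟨c, hc⟩ := Finset.dvd_prod_of_mem (fun i ↦ q ^ i - 1) (Finset.mem_Icc.mpr ⟨hm0, hmn⟩)
  rw [hc, pow_mul, hroot, one_pow]

/-- If `Φ·Σ·Φ⁻¹ = Σ^q` for invertible matrices over an algebraically closed field, then every
eigenvalue `λ` of `Σ` satisfies `λ^(qⁱ − 1) = 1` for some `1 ≤ i ≤ n`; in particular
`λ^M = 1` where `M = ∏_{i=1}^{n} (qⁱ − 1)`. -/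
theorem eigenvalue_root_of_unity_of_conj_pow
    (K : Type*) [Field K] [IsAlgClosed K]
    (n : ℕ) (hn : 1 ≤ n) (q : ℕ) (hq : 2 ≤ q)
    (Phi Sig : Matrix (Fin n) (Fin n) K) (hPhi : IsUnit Phi) (hSig : IsUnit Sig)
    (hconj : Phi * Sig * Phi⁻¹ = Sig ^ q) :
    ∀ lam : K, (Matrix.charpoly Sig).IsRoot lam →
      (∃ i : ℕ, 1 ≤ i ∧ i ≤ n ∧ lam ^ (q ^ i - 1) = 1) ∧
      lam ^ (∏ i ∈ Finset.Icc 1 n, (q ^ i - 1)) = 1 :=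
  eigenvalue_root_of_unity_of_conj_pow_general K n q hq Phi Sig hPhi hSig hconj
end

section
/- Let k be a field. In the ring R̃^{1,2,1}_k, the ideals (A,B) and (C,D) satisfy (A,B) ∩ (C,D) = (A,B)·(C,D); equivalently, the intersection (A,B) ∩ (C,D) equals the ideal generated by AC, AD, BC, BD (which, since BD = −AC in R̃^{1,2,1}_k, is the ideal (AC, AD, BC)). -/
open MvPolynomial

set_option maxHeartbeats 1000000
set_option synthInstance.maxHeartbeats 400000

/-- variables: `A=0, B=1, C=2, D=3, R=4, X=5, Y=6, Z=7`. -/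
noncomputable def idealR121 (k : Type*) [Field k] : Ideal (MvPolynomial (Fin 8) k) :=
  Ideal.span
    { X 5 * X 0 + X 7 * X 1 - X 0 * X 4,   -- XA+ZB−AR
      X 6 * X 0 - X 5 * X 1 - X 1 * X 4,   -- YA−XB−BR
      X 5 * X 2 + X 6 * X 3 + X 2 * X 4,   -- XC+YD+CR
      X 7 * X 2 - X 5 * X 3 + X 3 * X 4,   -- ZC−XD+DR
      X 5 ^ 2 + X 6 * X 7 - X 4 ^ 2,       -- X²+YZ−R²
      X 0 * X 2 + X 1 * X 3 }              -- AC+BD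

/-- The ring `R̃^{1,2,1}_k`. -/
abbrev RTilde121 (k : Type*) [Field k] : Type _ := MvPolynomial (Fin 8) k ⧸ idealR121 k

namespace RTilde121Aux

/-- The bigrading weights: `A,B ↦ (1,0)`, `C,D ↦ (0,1)`, the rest `(0,0)`. -/
def wt : Fin 8 → ℕ × ℕ := ![(1,0),(1,0),(0,1),(0,1),(0,0),(0,0),(0,0),(0,0)]

variable (k : Type*) [Field k]

noncomputable instance : GradedAlgebra (weightedHomogeneousSubmodule k wt) :=
  weightedGradedAlgebra k wt

lemma wt_apply (m : Fin 8 →₀ ℕ) : Finsupp.weight wt m = (m 0 + m 1, m 2 + m 3) := by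
  rw [Finsupp.weight_apply, Finsupp.sum_fintype _ _ (fun i => by rw [zero_smul])]
  rw [Fin.sum_univ_eight]
  simp [Prod.ext_iff, show wt 0 = (1,0) from rfl, show wt 1 = (1,0) from rfl,
    show wt 2 = (0,1) from rfl, show wt 3 = (0,1) from rfl, show wt 4 = (0,0) from rfl,
    show wt 5 = (0,0) from rfl, show wt 6 = (0,0) from rfl, show wt 7 = (0,0) from rfl]

lemma hXX (i j : Fin 8) (d : ℕ × ℕ) (h : wt i + wt j = d) :
    (X i * X j : MvPolynomial (Fin 8) k) ∈ weightedHomogeneousSubmodule k wt d :=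
  h ▸ ((isWeightedHomogeneous_X k wt i).mul (isWeightedHomogeneous_X k wt j))

lemma homog_idealR121 : (idealR121 k).IsHomogeneous (weightedHomogeneousSubmodule k wt) := by
  apply Ideal.homogeneous_span
  intro x hx
  simp only [Set.mem_insert_iff, Set.mem_singleton_iff] at hx
  rcases hx with rfl | rfl | rfl | rfl | rfl | rfl
  · exact ⟨(1,0), Submodule.sub_mem _ (Submodule.add_mem _
      (hXX k 5 0 _ (by decide)) (hXX k 7 1 _ (by decide))) (hXX k 0 4 _ (by decide))⟩
  · exact ⟨(1,0), Submodule.sub_mem _ (Submodule.sub_mem _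
      (hXX k 6 0 _ (by decide)) (hXX k 5 1 _ (by decide))) (hXX k 1 4 _ (by decide))⟩
  · exact ⟨(0,1), Submodule.add_mem _ (Submodule.add_mem _
      (hXX k 5 2 _ (by decide)) (hXX k 6 3 _ (by decide))) (hXX k 2 4 _ (by decide))⟩
  · exact ⟨(0,1), Submodule.add_mem _ (Submodule.sub_mem _
      (hXX k 7 2 _ (by decide)) (hXX k 5 3 _ (by decide))) (hXX k 3 4 _ (by decide))⟩
  · refine ⟨(0,0), Submodule.sub_mem _ (Submodule.add_mem _ ?_ (hXX k 6 7 _ (by decide)))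
      ?_⟩
    · rw [pow_two]; exact hXX k 5 5 _ (by decide)
    · rw [pow_two]; exact hXX k 4 4 _ (by decide)
  · exact ⟨(1,1), Submodule.add_mem _ (hXX k 0 2 _ (by decide)) (hXX k 1 3 _ (by decide))⟩


lemma monomial_single_single (i j : Fin 8) :
    (monomial (Finsupp.single i 1 + Finsupp.single j 1) (1:k)) = X i * X j := by
  rw [X, X, monomial_mul, one_mul]

lemma homog_spanAB :
    (Ideal.span {X 0, X 1} : Ideal (MvPolynomial (Fin 8) k)).IsHomogeneous
      (weightedHomogeneousSubmodule k wt) := by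
  apply Ideal.homogeneous_span
  rintro x hx
  simp only [Set.mem_insert_iff, Set.mem_singleton_iff] at hx
  rcases hx with rfl | rfl
  · exact ⟨wt 0, isWeightedHomogeneous_X k wt 0⟩
  · exact ⟨wt 1, isWeightedHomogeneous_X k wt 1⟩

lemma homog_spanCD :
    (Ideal.span {X 2, X 3} : Ideal (MvPolynomial (Fin 8) k)).IsHomogeneous
      (weightedHomogeneousSubmodule k wt) := by
  apply Ideal.homogeneous_span
  rintro x hx
  simp only [Set.mem_insert_iff, Set.mem_singleton_iff] at hx
  rcases hx with rfl | rfl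
  · exact ⟨wt 2, isWeightedHomogeneous_X k wt 2⟩
  · exact ⟨wt 3, isWeightedHomogeneous_X k wt 3⟩

lemma eq_zero_of_AB {p : MvPolynomial (Fin 8) k} {j : ℕ}
    (h1 : p ∈ Ideal.span ({X 0, X 1} : Set (MvPolynomial (Fin 8) k)))
    (h2 : p ∈ weightedHomogeneousSubmodule k wt ((0:ℕ), j)) : p = 0 := by
  rw [mem_weightedHomogeneousSubmodule] at h2
  rw [show ({X 0, X 1} : Set (MvPolynomial (Fin 8) k)) = MvPolynomial.X '' {0, 1} by
      rw [Set.image_pair], mem_ideal_span_X_image] at h1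
  rw [MvPolynomial.eq_zero_iff]
  intro d
  by_contra hc
  have hw := h2 hc
  rw [wt_apply, Prod.mk.injEq] at hw
  obtain ⟨i, hi, hdi⟩ := h1 d (mem_support_iff.mpr hc)
  rcases hi with rfl | hi
  · omega
  · rw [Set.mem_singleton_iff] at hi; subst hi; omega

lemma eq_zero_of_CD {p : MvPolynomial (Fin 8) k} {j : ℕ}
    (h1 : p ∈ Ideal.span ({X 2, X 3} : Set (MvPolynomial (Fin 8) k)))
    (h2 : p ∈ weightedHomogeneousSubmodule k wt (j, (0:ℕ))) : p = 0 := by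
  rw [mem_weightedHomogeneousSubmodule] at h2
  rw [show ({X 2, X 3} : Set (MvPolynomial (Fin 8) k)) = MvPolynomial.X '' {2, 3} by
      rw [Set.image_pair], mem_ideal_span_X_image] at h1
  rw [MvPolynomial.eq_zero_iff]
  intro d
  by_contra hc
  have hw := h2 hc
  rw [wt_apply, Prod.mk.injEq] at hw
  obtain ⟨i, hi, hdi⟩ := h1 d (mem_support_iff.mpr hc)
  rcases hi with rfl | hi
  · omega
  · rw [Set.mem_singleton_iff] at hi; subst hi; omega

lemma key (f : MvPolynomial (Fin 8) k)
    (h1 : f ∈ Ideal.span {X 0, X 1} ⊔ idealR121 k)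
    (h2 : f ∈ Ideal.span {X 2, X 3} ⊔ idealR121 k) :
    f ∈ Ideal.span {X 0 * X 2, X 0 * X 3, X 1 * X 2, X 1 * X 3} ⊔ idealR121 k := by
  classical
  have hI1 : (Ideal.span {X 0, X 1} ⊔ idealR121 k).IsHomogeneous
      (weightedHomogeneousSubmodule k wt) := (homog_spanAB k).sup (homog_idealR121 k)
  have hI2 : (Ideal.span {X 2, X 3} ⊔ idealR121 k).IsHomogeneous
      (weightedHomogeneousSubmodule k wt) := (homog_spanCD k).sup (homog_idealR121 k)
  rw [← DirectSum.sum_support_decompose (weightedHomogeneousSubmodule k wt) f]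
  refine Ideal.sum_mem _ (fun d _ => ?_)
  obtain ⟨d1, d2⟩ := d
  set g : MvPolynomial (Fin 8) k :=
    (DirectSum.decompose (weightedHomogeneousSubmodule k wt) f (d1, d2) : MvPolynomial (Fin 8) k)
    with hgdef
  have hg : g ∈ weightedHomogeneousSubmodule k wt (d1, d2) := SetLike.coe_mem _
  rw [mem_weightedHomogeneousSubmodule] at hg
  have hg1 : g ∈ Ideal.span {X 0, X 1} ⊔ idealR121 k := hI1 (d1, d2) h1
  have hg2 : g ∈ Ideal.span {X 2, X 3} ⊔ idealR121 k := hI2 (d1, d2) h2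
  rcases Nat.eq_zero_or_pos d1 with hd1 | hd1
  · subst hd1
    obtain ⟨a, ha, b, hb, hab⟩ := Submodule.mem_sup.mp hg1
    have hsplit : g = (DirectSum.decompose (weightedHomogeneousSubmodule k wt) a (0, d2) :
        MvPolynomial (Fin 8) k) +
        (DirectSum.decompose (weightedHomogeneousSubmodule k wt) b (0, d2) :
        MvPolynomial (Fin 8) k) := by
      conv_lhs => rw [← DirectSum.decompose_of_mem_same (weightedHomogeneousSubmodule k wt)
        (show g ∈ weightedHomogeneousSubmodule k wt (0, d2) from hg), ← hab]
      rw [DirectSum.decompose_add]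
      rfl
    have hza : (DirectSum.decompose (weightedHomogeneousSubmodule k wt) a (0, d2) :
        MvPolynomial (Fin 8) k) = 0 :=
      eq_zero_of_AB k ((homog_spanAB k) (0, d2) ha) (SetLike.coe_mem _)
    rw [hsplit, hza, zero_add]
    exact Ideal.mem_sup_right ((homog_idealR121 k) (0, d2) hb)
  rcases Nat.eq_zero_or_pos d2 with hd2 | hd2
  · subst hd2
    obtain ⟨a, ha, b, hb, hab⟩ := Submodule.mem_sup.mp hg2
    have hsplit : g = (DirectSum.decompose (weightedHomogeneousSubmodule k wt) a (d1, 0) :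
        MvPolynomial (Fin 8) k) +
        (DirectSum.decompose (weightedHomogeneousSubmodule k wt) b (d1, 0) :
        MvPolynomial (Fin 8) k) := by
      conv_lhs => rw [← DirectSum.decompose_of_mem_same (weightedHomogeneousSubmodule k wt)
        (show g ∈ weightedHomogeneousSubmodule k wt (d1, 0) from hg), ← hab]
      rw [DirectSum.decompose_add]
      rfl
    have hza : (DirectSum.decompose (weightedHomogeneousSubmodule k wt) a (d1, 0) :
        MvPolynomial (Fin 8) k) = 0 :=
      eq_zero_of_CD k ((homog_spanCD k) (d1, 0) ha) (SetLike.coe_mem _)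
    rw [hsplit, hza, zero_add]
    exact Ideal.mem_sup_right ((homog_idealR121 k) (d1, 0) hb)
  · apply Ideal.mem_sup_left
    have hmem : g ∈ Ideal.span ((fun s => monomial s (1:k)) ''
        {Finsupp.single 0 1 + Finsupp.single 2 1, Finsupp.single 0 1 + Finsupp.single 3 1,
         Finsupp.single 1 1 + Finsupp.single 2 1, Finsupp.single 1 1 + Finsupp.single 3 1}) := by
      rw [mem_ideal_span_monomial_image]
      intro m hm
      have hw := hg (mem_support_iff.mp hm)
      rw [wt_apply, Prod.mk.injEq] at hw
      have h01 : m 0 ≠ 0 ∨ m 1 ≠ 0 := by omega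
      have h23 : m 2 ≠ 0 ∨ m 3 ≠ 0 := by omega
      have hle : ∀ (a c : Fin 8), m a ≠ 0 → m c ≠ 0 → a ≠ c →
          Finsupp.single a 1 + Finsupp.single c 1 ≤ m := by
        intro a c ha hc hne
        rw [Finsupp.le_def]
        intro x
        simp only [Finsupp.add_apply, Finsupp.single_apply]
        split_ifs with hax hcx hcx
        · exact absurd (hax.trans hcx.symm) hne
        · subst hax; omega
        · subst hcx; omega
        · omega
      rcases h01 with h0 | h0 <;> rcases h23 with h2' | h2'
      · exact ⟨_, by simp, hle 0 2 h0 h2' (by decide)⟩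
      · exact ⟨_, by simp, hle 0 3 h0 h2' (by decide)⟩
      · exact ⟨_, by simp, hle 1 2 h0 h2' (by decide)⟩
      · exact ⟨_, by simp, hle 1 3 h0 h2' (by decide)⟩
    rwa [Set.image_insert_eq, Set.image_insert_eq, Set.image_insert_eq, Set.image_singleton,
      monomial_single_single, monomial_single_single, monomial_single_single,
      monomial_single_single] at hmem

lemma lift_mem_pair (u v f : MvPolynomial (Fin 8) k)
    (hx : Ideal.Quotient.mk (idealR121 k) f ∈
      Ideal.span {Ideal.Quotient.mk (idealR121 k) u, Ideal.Quotient.mk (idealR121 k) v}) :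
    f ∈ Ideal.span {u, v} ⊔ idealR121 k := by
  obtain ⟨a, b, hab⟩ := Ideal.mem_span_pair.mp hx
  obtain ⟨p, rfl⟩ := Ideal.Quotient.mk_surjective a
  obtain ⟨q, rfl⟩ := Ideal.Quotient.mk_surjective b
  rw [← map_mul, ← map_mul, ← map_add] at hab
  have hmem : (p * u + q * v) - f ∈ idealR121 k := Ideal.Quotient.eq.mp hab
  exact Submodule.mem_sup.mpr ⟨p * u + q * v, Ideal.mem_span_pair.mpr ⟨p, q, rfl⟩,
    -((p * u + q * v) - f), Submodule.neg_mem _ hmem, by ring⟩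

end RTilde121Aux

/-- In `R̃^{1,2,1}_k`, the ideals `(A,B)` and `(C,D)` satisfy
`(A,B) ∩ (C,D) = (A,B)·(C,D)`, which is the ideal generated by `AC, AD, BC, BD`. -/
theorem rTilde121_inter_eq_mul (k : Type*) [Field k] :
    Ideal.span
        ({Ideal.Quotient.mk (idealR121 k) (X 0), Ideal.Quotient.mk (idealR121 k) (X 1)} :
          Set (RTilde121 k)) ⊓
      Ideal.span
        ({Ideal.Quotient.mk (idealR121 k) (X 2), Ideal.Quotient.mk (idealR121 k) (X 3)} :
          Set (RTilde121 k)) =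
    Ideal.span
        ({Ideal.Quotient.mk (idealR121 k) (X 0), Ideal.Quotient.mk (idealR121 k) (X 1)} :
          Set (RTilde121 k)) *
      Ideal.span
        ({Ideal.Quotient.mk (idealR121 k) (X 2), Ideal.Quotient.mk (idealR121 k) (X 3)} :
          Set (RTilde121 k)) ∧
    Ideal.span
        ({Ideal.Quotient.mk (idealR121 k) (X 0), Ideal.Quotient.mk (idealR121 k) (X 1)} :
          Set (RTilde121 k)) ⊓
      Ideal.span
        ({Ideal.Quotient.mk (idealR121 k) (X 2), Ideal.Quotient.mk (idealR121 k) (X 3)} :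
          Set (RTilde121 k)) =
    Ideal.span
        ({Ideal.Quotient.mk (idealR121 k) (X 0 * X 2), Ideal.Quotient.mk (idealR121 k) (X 0 * X 3),
          Ideal.Quotient.mk (idealR121 k) (X 1 * X 2), Ideal.Quotient.mk (idealR121 k) (X 1 * X 3)} :
          Set (RTilde121 k)) := by
  set J1 : Ideal (RTilde121 k) := Ideal.span
    {Ideal.Quotient.mk (idealR121 k) (X 0), Ideal.Quotient.mk (idealR121 k) (X 1)} with hJ1
  set J2 : Ideal (RTilde121 k) := Ideal.span
    {Ideal.Quotient.mk (idealR121 k) (X 2), Ideal.Quotient.mk (idealR121 k) (X 3)} with hJ2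
  set J3 : Ideal (RTilde121 k) := Ideal.span
    {Ideal.Quotient.mk (idealR121 k) (X 0 * X 2), Ideal.Quotient.mk (idealR121 k) (X 0 * X 3),
     Ideal.Quotient.mk (idealR121 k) (X 1 * X 2), Ideal.Quotient.mk (idealR121 k) (X 1 * X 3)}
    with hJ3
  have h34 : J3 ≤ J1 * J2 := by
    rw [hJ3, Ideal.span_le]
    rintro x hx
    simp only [Set.mem_insert_iff, Set.mem_singleton_iff] at hx
    rcases hx with rfl | rfl | rfl | rfl <;>
      · rw [map_mul]
        exact Ideal.mul_mem_mul (Ideal.subset_span (by simp)) (Ideal.subset_span (by simp))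
  have hmul_le : J1 * J2 ≤ J1 ⊓ J2 := Ideal.mul_le_inf
  have hmain : J1 ⊓ J2 ≤ J3 := by
    intro x hx
    obtain ⟨hx1, hx2⟩ := Submodule.mem_inf.mp hx
    obtain ⟨f, rfl⟩ := Ideal.Quotient.mk_surjective x
    have h1 := RTilde121Aux.lift_mem_pair k (X 0) (X 1) f hx1
    have h2 := RTilde121Aux.lift_mem_pair k (X 2) (X 3) f hx2
    obtain ⟨a, ha, b, hb, hab⟩ := Submodule.mem_sup.mp (RTilde121Aux.key k f h1 h2)
    have heq : Ideal.Quotient.mk (idealR121 k) f = Ideal.Quotient.mk (idealR121 k) a := by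
      rw [← hab, map_add, Ideal.Quotient.eq_zero_iff_mem.mpr hb, add_zero]
    rw [heq]
    have hmap := Ideal.mem_map_of_mem (Ideal.Quotient.mk (idealR121 k)) ha
    rw [Ideal.map_span, Set.image_insert_eq, Set.image_insert_eq, Set.image_insert_eq,
      Set.image_singleton] at hmap
    exact hmap
  exact ⟨le_antisymm (hmain.trans h34) hmul_le, le_antisymm hmain (h34.trans hmul_le)⟩
end
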